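/- The kernel of Δ' = x^2 ∂/∂v + xv ∂/∂t + t ∂/∂u on k[x,v,t,u] equals k[h1,h2,h3,h4], where h1 = x, h2 = 2xt − v^2, h3 = 3x^3 u − 3xvt + v^3, and h4 = 8xt^3 + 9x^4 u^2 − 18x^2 t u v − 3t^2 v^2 + 6 x u v^3. -/

import Mathlib

/-!
Since `Δ' x = 0` and `Δ' v = x²`, the variable `v` becomes a slice once `x` is inverted: the
substitution `t ↦ h₂, u ↦ h₃` is injective and turns `Δ'` into `x² ∂/∂v`, and a suitable power
of `x` carries every polynomial into its image. Hence for `f` in the kernel some `x ^ N * f` is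
a polynomial in `x, h₂, h₃`.

It remains to divide by `x` inside `K[x, h₂, h₃, h₄]`, the image of `Y ↦ (x, h₂, h₃, h₄)`.
Modulo `x` the images of `Y₂, Y₃, Y₄` are `-v², v³, -3t²v²`; comparing the parts even and odd
in `v` shows that their relations are generated by `Y₂³ + Y₃²`, and `h₂³ + h₃² = x² h₄`. So if
`x * g = P(x, h₂, h₃, h₄)`, then `P = Y₁ * P₁ + c * (Y₂³ + Y₃²)` and
`g = P₁(x, h₂, h₃, h₄) + x * h₄ * c(x, h₂, h₃, h₄)`.
-/

open MvPolynomial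

theorem Derivation.map_ofNat {R A M : Type*} [CommSemiring R] [CommSemiring A] [Algebra R A]
    [AddCommMonoid M] [Module A M] [Module R M] (D : Derivation R A M) (n : ℕ) [n.AtLeastTwo] :
    D (no_index (OfNat.ofNat n : A)) = 0 :=
  D.map_natCast n

theorem Derivation.map_aeval_eq_sum_pderiv {R σ A M : Type*} [CommSemiring R] [Fintype σ]
    [CommSemiring A] [Algebra R A] [AddCommMonoid M] [Module A M] [Module R M]
    [IsScalarTower R A M] (D : Derivation R A M) (g : σ → A) (f : MvPolynomial σ R) :
    D (aeval g f) = ∑ i, aeval g (pderiv i f) • D (g i) := by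
  classical
  induction f using MvPolynomial.induction_on with
  | C a => simp
  | add p q hp hq => simp only [map_add, hp, hq, add_smul, Finset.sum_add_distrib]
  | mul_X p j hp =>
    simp [Derivation.leibniz, hp, pderiv_X, add_smul, mul_smul, Finset.sum_add_distrib,
      Finset.smul_sum, Pi.single_apply, smul_comm (g j), apply_ite (aeval g), ite_smul]

namespace MvPolynomial

variable {σ R : Type*}

theorem notMem_vars_of_pderiv_eq_zero [CommSemiring R] [NoZeroDivisors R] [CharZero R]
    {i : σ} {f : MvPolynomial σ R} (h : pderiv i f = 0) : i ∉ f.vars := by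
  classical
  intro hi
  obtain ⟨m, hm, him⟩ := (mem_vars_iff_mem_support i).mp hi
  have hm' : m - Finsupp.single i 1 + Finsupp.single i 1 = m := by
    ext j
    by_cases hj : j = i
    · subst hj; simp at him ⊢; omega
    · simp [Ne.symm hj]
  have := coeff_pderiv (i := i) f (m - Finsupp.single i 1)
  rw [h, coeff_zero, hm'] at this
  exact mul_ne_zero (mem_support_iff.mp hm) (Nat.cast_add_one_ne_zero _) this.symm

theorem exists_pow_mul_mem_of_forall_X [CommSemiring R] {S : Subalgebra R (MvPolynomial σ R)}
    {x : MvPolynomial σ R} (hx : x ∈ S) (hX : ∀ i, ∃ n, x ^ n * X i ∈ S)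
    (f : MvPolynomial σ R) : ∃ N, x ^ N * f ∈ S := by
  induction f using MvPolynomial.induction_on with
  | C a => exact ⟨0, by simpa using S.algebraMap_mem a⟩
  | add p q hp hq =>
    obtain ⟨N, hN⟩ := hp
    obtain ⟨M, hM⟩ := hq
    refine ⟨N + M, ?_⟩
    rw [show x ^ (N + M) * (p + q) = x ^ M * (x ^ N * p) + x ^ N * (x ^ M * q) by ring]
    exact add_mem (mul_mem (pow_mem hx M) hN) (mul_mem (pow_mem hx N) hM)
  | mul_X p i hp =>
    obtain ⟨N, hN⟩ := hp
    obtain ⟨n, hn⟩ := hX i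
    exact ⟨N + n, by rw [pow_add]; convert mul_mem hN hn using 1; ring⟩

theorem eq_zero_of_expand_add_X_pow_mul_expand_eq_zero [CommRing R] [IsDomain R] [CharZero R]
    {i : σ} {n : ℕ} (hn : Odd n) {a b : MvPolynomial σ R}
    (h : expand 2 a + X i ^ n * expand 2 b = 0) : a = 0 ∧ b = 0 := by
  classical
  let reflect : MvPolynomial σ R →ₐ[R] MvPolynomial σ R := aeval (Function.update X i (-X i))
  have reflect_expand : reflect.comp (expand 2) = expand 2 := by
    ext j
    by_cases hj : j = i <;> simp [reflect, hj]
  have reflect_X : reflect (X i) = -X i := by simp [reflect]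
  have h' : expand 2 a - X i ^ n * expand 2 b = 0 := by
    have := congr(reflect $h)
    rwa [map_add, map_mul, map_pow, reflect_X, hn.neg_pow, ← AlgHom.comp_apply,
      ← AlgHom.comp_apply, reflect_expand, map_zero, neg_mul, ← sub_eq_add_neg] at this
  have ha : (2 : MvPolynomial σ R) * expand 2 a = 0 := by linear_combination h + h'
  rw [mul_eq_zero, or_iff_right two_ne_zero, expand_eq_zero two_pos] at ha
  rw [ha, map_zero, zero_add, mul_eq_zero, or_iff_right (pow_ne_zero _ (X_ne_zero i)),
    expand_eq_zero two_pos] at h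
  exact ⟨ha, h⟩

theorem injective_of_aeval_comp_eq_algebraMap {τ : Type*} [CommRing R] [IsDomain R]
    {φ : MvPolynomial σ R →ₐ[R] MvPolynomial τ R} (g : τ → FractionRing (MvPolynomial σ R))
    (h : ∀ i, aeval g (φ (X i)) = algebraMap (MvPolynomial σ R) _ (X i)) :
    Function.Injective φ := by
  refine Function.Injective.of_comp (f := aeval g) ?_
  rw [← AlgHom.coe_comp, show (aeval g).comp φ = IsScalarTower.toAlgHom R _ _ from
    algHom_ext fun i => by simpa using h i]
  exact IsFractionRing.injective _ _

end MvPolynomial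

noncomputable section

namespace DeltaPrime

variable (K : Type*) [Field K]

def h₂ : MvPolynomial (Fin 4) K := 2 * X 0 * X 2 - X 1 ^ 2

def h₃ : MvPolynomial (Fin 4) K := 3 * X 0 ^ 3 * X 3 - 3 * X 0 * X 1 * X 2 + X 1 ^ 3

def h₄ : MvPolynomial (Fin 4) K :=
  8 * X 0 * X 2 ^ 3 + 9 * X 0 ^ 4 * X 3 ^ 2
    - 18 * X 0 ^ 2 * X 2 * X 3 * X 1 - 3 * X 2 ^ 2 * X 1 ^ 2
    + 6 * X 0 * X 3 * X 1 ^ 3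

theorem h₂_pow_three_add_h₃_sq : h₂ K ^ 3 + h₃ K ^ 2 = X 0 ^ 2 * h₄ K := by
  simp only [h₂, h₃, h₄]
  ring

def sliceMap : MvPolynomial (Fin 4) K →ₐ[K] MvPolynomial (Fin 4) K :=
  aeval ![X 0, X 1, h₂ K, h₃ K]

def invariantMap : MvPolynomial (Fin 4) K →ₐ[K] MvPolynomial (Fin 4) K :=
  aeval ![X 0, h₂ K, h₃ K, h₄ K]

def reduceModX : MvPolynomial (Fin 4) K →ₐ[K] MvPolynomial (Fin 4) K :=
  aeval ![0, X 1, X 2, X 3]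

def reductionRoot : MvPolynomial (Fin 2) K →ₐ[K] MvPolynomial (Fin 4) K :=
  aeval ![-X 1, -3 * X 2 * X 1]

theorem adjoin_eq_range_invariantMap :
    Algebra.adjoin K {X 0, h₂ K, h₃ K, h₄ K} = (invariantMap K).range := by
  rw [invariantMap, ← Algebra.adjoin_range_eq_range_aeval]
  congr 1
  ext
  simp only [Set.mem_insert_iff, Set.mem_singleton_iff, Matrix.range_cons, Matrix.range_empty,
    Set.union_empty, Set.mem_union]

theorem sliceMap_injective [CharZero K] : Function.Injective (sliceMap K) := by
  let x (i : Fin 4) : FractionRing (MvPolynomial (Fin 4) K) :=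
    algebraMap (MvPolynomial (Fin 4) K) _ (X i)
  have hx : x 0 ≠ 0 := by simp [x, X_ne_zero]
  refine injective_of_aeval_comp_eq_algebraMap ![x 0, x 1, (x 2 + x 1 ^ 2) / (2 * x 0),
    (2 * x 3 + 3 * x 1 * x 2 + x 1 ^ 3) / (6 * x 0 ^ 3)] fun i => ?_
  fin_cases i <;> simp [sliceMap, h₂, h₃] <;> field_simp <;> ring

theorem exists_X_zero_pow_mul_X_mem_range_sliceMap [CharZero K] (i : Fin 4) :
    ∃ n, X 0 ^ n * X i ∈ (sliceMap K).range := by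
  have inv_two : (C (2⁻¹ : K) : MvPolynomial (Fin 4) K) * 2 = 1 := by
    rw [← map_ofNat C, ← C_mul, inv_mul_cancel₀ two_ne_zero, C_1]
  have inv_six : (C (6⁻¹ : K) : MvPolynomial (Fin 4) K) * 6 = 1 := by
    rw [← map_ofNat C, ← C_mul, inv_mul_cancel₀ (by norm_num), C_1]
  fin_cases i
  · exact ⟨0, X 0, by simp [sliceMap]⟩
  · exact ⟨0, X 1, by simp [sliceMap]⟩
  · refine ⟨1, C 2⁻¹ * (X 2 + X 1 ^ 2), ?_⟩
    simp [sliceMap, h₂]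
    linear_combination (X 0 * X 2) * inv_two
  · refine ⟨3, C 6⁻¹ * (2 * X 3 + 3 * X 1 * X 2 + X 1 ^ 3), ?_⟩
    simp [sliceMap, h₂, h₃, map_ofNat]
    linear_combination (X 0 ^ 3 * X 3) * inv_six

theorem sliceMap_mem_range_invariantMap {F : MvPolynomial (Fin 4) K} (hF : 1 ∉ F.vars) :
    sliceMap K F ∈ (invariantMap K).range := by
  refine ⟨aeval ![X 0, 0, X 1, X 2] F, ?_⟩
  refine hom_congr_vars (f₁ := ((invariantMap K).comp (aeval ![X 0, 0, X 1, X 2])).toRingHom)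
    (by ext; simp) (fun i hi _ => ?_) rfl
  have hi : i ≠ 1 := fun h => hF (h ▸ hi)
  fin_cases i <;> simp_all [invariantMap, sliceMap]

theorem reductionRoot_injective [CharZero K] : Function.Injective (reductionRoot K) := by
  let y (i : Fin 2) : FractionRing (MvPolynomial (Fin 2) K) :=
    algebraMap (MvPolynomial (Fin 2) K) _ (X i)
  have hy : y 0 ≠ 0 := by simp [y, X_ne_zero]
  refine injective_of_aeval_comp_eq_algebraMap ![0, -y 0, y 1 / (3 * y 0), 0] fun i => ?_
  fin_cases i <;> simp [reductionRoot] <;> field_simp <;> rfl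

theorem reduceModX_invariantMap_rename (p : MvPolynomial (Fin 2) K) :
    reduceModX K (invariantMap K (rename ![1, 3] p)) = expand 2 (reductionRoot K p) := by
  suffices ((reduceModX K).comp (invariantMap K)).comp (rename ![1, 3]) =
      (expand 2).comp (reductionRoot K) from AlgHom.congr_fun this p
  refine algHom_ext fun i => ?_
  fin_cases i <;> simp [map_ofNat, reductionRoot, reduceModX, invariantMap, h₂, h₄]

theorem exists_eq_X_zero_mul_add_mul_add_rename (Q : MvPolynomial (Fin 4) K) :
    ∃ (P c : MvPolynomial (Fin 4) K) (a b : MvPolynomial (Fin 2) K),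
      Q = X 0 * P + c * (X 2 ^ 2 + X 1 ^ 3) + rename ![1, 3] a + rename ![1, 3] b * X 2 := by
  induction Q using MvPolynomial.induction_on with
  | C r => exact ⟨0, 0, C r, 0, by simp⟩
  | add p q hp hq =>
    obtain ⟨P, c, a, b, rfl⟩ := hp
    obtain ⟨P', c', a', b', rfl⟩ := hq
    exact ⟨P + P', c + c', a + a', b + b', by simp only [map_add]; ring⟩
  | mul_X Q i hQ =>
    obtain ⟨P, c, a, b, hQ⟩ := hQ
    fin_cases i
    · exact ⟨Q, 0, 0, 0, by simp [mul_comm]⟩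
    all_goals rw [hQ]
    · exact ⟨P * X 1, c * X 1, a * X 0, b * X 0, by simp; ring⟩
    · exact ⟨P * X 2, c * X 2 + rename ![1, 3] b, -(b * X 0 ^ 3), a, by simp; ring⟩
    · exact ⟨P * X 3, c * X 3, a * X 1, b * X 1, by simp; ring⟩

theorem mem_range_invariantMap_of_X_zero_mul_mem [CharZero K] {g : MvPolynomial (Fin 4) K}
    (hg : X 0 * g ∈ (invariantMap K).range) : g ∈ (invariantMap K).range := by
  obtain ⟨Q, hQ⟩ := (AlgHom.mem_range _).mp hg
  obtain ⟨P, c, a, b, rfl⟩ := exists_eq_X_zero_mul_add_mul_add_rename K Q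
  have relation : invariantMap K (X 2 ^ 2 + X 1 ^ 3) = X 0 ^ 2 * h₄ K := by
    simp [invariantMap, ← h₂_pow_three_add_h₃_sq, add_comm]
  rw [map_add, map_add, map_add, map_mul _ c, relation] at hQ
  have hreduce : expand 2 (reductionRoot K a) + X 1 ^ 3 * expand 2 (reductionRoot K b) = 0 := by
    have := congr(reduceModX K $hQ)
    simp only [map_add, map_mul, reduceModX_invariantMap_rename] at this
    simpa [reduceModX, invariantMap, h₃, mul_comm] using this
  obtain ⟨ha, hb⟩ := eq_zero_of_expand_add_X_pow_mul_expand_eq_zero (by decide) hreduce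
  rw [map_eq_zero_iff _ (reductionRoot_injective K)] at ha hb
  refine ⟨P + c * (X 0 * X 3), mul_left_cancel₀ (X_ne_zero 0) ?_⟩
  rw [← hQ, ha, hb]
  simp [invariantMap]
  ring

theorem mem_range_invariantMap_of_X_zero_pow_mul_mem [CharZero K] {g : MvPolynomial (Fin 4) K}
    {n : ℕ} (hg : X 0 ^ n * g ∈ (invariantMap K).range) : g ∈ (invariantMap K).range := by
  induction n generalizing g with
  | zero => simpa using hg
  | succ n ih =>
    exact mem_range_invariantMap_of_X_zero_mul_mem K (ih (by rwa [← mul_assoc, ← pow_succ]))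

section Derivation

variable {K} (Δ : Derivation K (MvPolynomial (Fin 4) K) (MvPolynomial (Fin 4) K))
  (hΔx : Δ (X 0) = 0) (hΔv : Δ (X 1) = X 0 ^ 2) (hΔt : Δ (X 2) = X 0 * X 1)
  (hΔu : Δ (X 3) = X 2)
include hΔx hΔv hΔt

theorem derivation_h₂ : Δ (h₂ K) = 0 := by
  simp [h₂, Derivation.leibniz, Derivation.leibniz_pow, Derivation.map_ofNat, hΔx, hΔv, hΔt]
  ring

include hΔu

theorem derivation_h₃ : Δ (h₃ K) = 0 := by
  simp [h₃, Derivation.leibniz, Derivation.leibniz_pow, Derivation.map_ofNat,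
    hΔx, hΔv, hΔt, hΔu]
  ring

theorem derivation_h₄ : Δ (h₄ K) = 0 := by
  simp [h₄, Derivation.leibniz, Derivation.leibniz_pow, Derivation.map_ofNat,
    hΔx, hΔv, hΔt, hΔu]
  ring

theorem derivation_sliceMap (F : MvPolynomial (Fin 4) K) :
    Δ (sliceMap K F) = X 0 ^ 2 * sliceMap K (pderiv 1 F) := by
  rw [sliceMap, Derivation.map_aeval_eq_sum_pderiv, Fin.sum_univ_four]
  simp [hΔx, hΔv, derivation_h₂ Δ hΔx hΔv hΔt, derivation_h₃ Δ hΔx hΔv hΔt hΔu, mul_comm]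

theorem derivation_invariantMap (P : MvPolynomial (Fin 4) K) : Δ (invariantMap K P) = 0 := by
  rw [invariantMap, Derivation.map_aeval_eq_sum_pderiv, Fin.sum_univ_four]
  simp [hΔx, derivation_h₂ Δ hΔx hΔv hΔt, derivation_h₃ Δ hΔx hΔv hΔt hΔu,
    derivation_h₄ Δ hΔx hΔv hΔt hΔu]

theorem exists_X_zero_pow_mul_mem_range_invariantMap [CharZero K]
    {f : MvPolynomial (Fin 4) K} (hf : Δ f = 0) : ∃ N, X 0 ^ N * f ∈ (invariantMap K).range := by
  have hx : X 0 ∈ (sliceMap K).range := ⟨X 0, by simp [sliceMap]⟩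
  obtain ⟨N, hN⟩ :=
    exists_pow_mul_mem_of_forall_X hx (exists_X_zero_pow_mul_X_mem_range_sliceMap K) f
  obtain ⟨F, hF⟩ := (AlgHom.mem_range _).mp hN
  have hF' : pderiv 1 F = 0 := by
    have h := derivation_sliceMap Δ hΔx hΔv hΔt hΔu F
    rw [hF, Derivation.leibniz, Derivation.leibniz_pow, hf, hΔx] at h
    simpa [sliceMap_injective K, map_eq_zero_iff] using h.symm
  exact ⟨N, hF ▸ sliceMap_mem_range_invariantMap K (notMem_vars_of_pderiv_eq_zero hF')⟩

end Derivation

end DeltaPrime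

end

theorem kernel_of_Delta_prime
    (K : Type*) [Field K] [CharZero K]
    (Δ' : Derivation K (MvPolynomial (Fin 4) K) (MvPolynomial (Fin 4) K))
    (hΔx : Δ' (X 0) = 0) (hΔv : Δ' (X 1) = X 0 ^ 2)
    (hΔt : Δ' (X 2) = X 0 * X 1) (hΔu : Δ' (X 3) = X 2) :
    ∀ f : MvPolynomial (Fin 4) K,
      Δ' f = 0 ↔
        f ∈ Algebra.adjoin K
          ({X 0,
            2 * X 0 * X 2 - X 1 ^ 2,
            3 * X 0 ^ 3 * X 3 - 3 * X 0 * X 1 * X 2 + X 1 ^ 3,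
            8 * X 0 * X 2 ^ 3 + 9 * X 0 ^ 4 * X 3 ^ 2
              - 18 * X 0 ^ 2 * X 2 * X 3 * X 1 - 3 * X 2 ^ 2 * X 1 ^ 2
              + 6 * X 0 * X 3 * X 1 ^ 3} :
            Set (MvPolynomial (Fin 4) K)) := by
  intro f
  change Δ' f = 0 ↔
    f ∈ Algebra.adjoin K {X 0, DeltaPrime.h₂ K, DeltaPrime.h₃ K, DeltaPrime.h₄ K}
  rw [DeltaPrime.adjoin_eq_range_invariantMap]
  constructor
  · intro hf
    obtain ⟨N, hN⟩ :=
      DeltaPrime.exists_X_zero_pow_mul_mem_range_invariantMap Δ' hΔx hΔv hΔt hΔu hf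
    exact DeltaPrime.mem_range_invariantMap_of_X_zero_pow_mul_mem K hN
  · rintro ⟨P, rfl⟩
    exact DeltaPrime.derivation_invariantMap Δ' hΔx hΔv hΔt hΔu P
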